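/- For every ℓ ∈ ℕ^r, there exists an element f ∈ O with ord_i f = ℓ_i for every i (i.e., ℓ belongs to the semigroup of values of O) if and only if h(ℓ+E_i) > h(ℓ) for every index i. -/

import Mathlib

/-- `Gbar r ℓ` is the subspace of `r`-tuples of power series whose `i`-th component has
order at least `ℓ i`, for every `i`. -/
noncomputable def Gbar (r : ℕ) (ℓ : Fin r → ℕ) : Submodule ℂ (Fin r → PowerSeries ℂ) where
  carrier := {f | ∀ i : Fin r, (ℓ i : ℕ∞) ≤ (f i).order}
  zero_mem' := by
    intro i
    simp [PowerSeries.order_zero]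
  add_mem' := by
    intro a b ha hb i
    refine le_trans (le_min (ha i) (hb i)) ?_
    simpa using PowerSeries.min_order_le_order_add (a i) (b i)
  smul_mem' := by
    intro c f hf i
    refine PowerSeries.le_order _ _ ?_
    intro n hn
    have hlt : (n : ℕ∞) < ((f : Fin r → PowerSeries ℂ) i).order := lt_of_lt_of_le hn (hf i)
    have : (PowerSeries.coeff (R := ℂ) n) ((c • f) i) = c • (PowerSeries.coeff (R := ℂ) n) (f i) := by
      simp
    rw [this, PowerSeries.coeff_of_lt_order n hlt, smul_zero]

/-- `F O ℓ = O ∩ Ḡ(ℓ)`, the valuation filtration of the subspace `O`. -/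
noncomputable def Ffil (r : ℕ) (O : Submodule ℂ (Fin r → PowerSeries ℂ)) (ℓ : Fin r → ℕ) :
    Submodule ℂ (Fin r → PowerSeries ℂ) :=
  O ⊓ Gbar r ℓ

/-- `hfun O ℓ = dim_ℂ O / (O ∩ Ḡ(ℓ))`, the Hilbert function of the filtration. -/
noncomputable def hfun (r : ℕ) (O : Submodule ℂ (Fin r → PowerSeries ℂ)) (ℓ : Fin r → ℕ) : ℕ :=
  Module.finrank ℂ (O ⧸ (Gbar r ℓ).comap O.subtype)

/-- `hbarfun O ℓ = dim_ℂ V / (Ḡ(ℓ) + O)`. -/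
noncomputable def hbarfun (r : ℕ) (O : Submodule ℂ (Fin r → PowerSeries ℂ)) (ℓ : Fin r → ℕ) : ℕ :=
  Module.finrank ℂ ((Fin r → PowerSeries ℂ) ⧸ (Gbar r ℓ ⊔ O))

/-- `eN i` is the `i`-th standard basis vector of `ℕ^r`. -/
def eN {r : ℕ} (i : Fin r) : Fin r → ℕ := fun j => if j = i then 1 else 0

/-!
Inside `F(ℓ)`, the subspace `F(ℓ + E_i)` is the kernel of the functional `f ↦ [T^{ℓ_i}] f_i`, so
`h(ℓ + E_i) > h(ℓ)` says exactly that this functional does not vanish on `F(ℓ)`. An element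
`f ∈ O` with `ord_i f = ℓ_i` for all `i` is an element of `F(ℓ)` on which all `r` functionals are
nonzero. Over the infinite field `ℂ` the space `F(ℓ)` is not the union of the `r` kernels, so
such an element exists as soon as every functional is nonzero on `F(ℓ)`.
-/

open PowerSeries

theorem PowerSeries.nat_le_order_iff {R : Type*} [Semiring R] (φ : R⟦X⟧) (n : ℕ) :
    (n : ℕ∞) ≤ φ.order ↔ ∀ k < n, coeff k φ = 0 :=
  ⟨fun h k hk => coeff_of_lt_order k (lt_of_lt_of_le (by exact_mod_cast hk) h),
    nat_le_order φ n⟩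

theorem PowerSeries.order_eq_nat_iff_le_and_coeff_ne_zero {R : Type*} [Semiring R]
    (φ : R⟦X⟧) (n : ℕ) : φ.order = n ↔ (n : ℕ∞) ≤ φ.order ∧ coeff n φ ≠ 0 := by
  rw [order_eq_nat, nat_le_order_iff, and_comm]

theorem PowerSeries.succ_le_order_iff {R : Type*} [Semiring R] (φ : R⟦X⟧) (n : ℕ) :
    ((n + 1 : ℕ) : ℕ∞) ≤ φ.order ↔ (n : ℕ∞) ≤ φ.order ∧ coeff n φ = 0 := by
  rw [nat_le_order_iff, nat_le_order_iff, Nat.forall_lt_succ_right]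

theorem finiteDimensional_quotient_comap_ker {K M W : Type*} [Field K] [AddCommGroup M]
    [Module K M] [AddCommGroup W] [Module K W] [FiniteDimensional K W]
    (T : M →ₗ[K] W) (O : Submodule K M) :
    FiniteDimensional K (O ⧸ (LinearMap.ker T).comap O.subtype) := by
  rw [← LinearMap.ker_comp]
  exact (LinearMap.quotKerEquivRange (T ∘ₗ O.subtype)).symm.finiteDimensional

theorem finrank_quotient_lt_of_lt {K M : Type*} [Field K] [AddCommGroup M] [Module K M]
    {A B : Submodule K M} [FiniteDimensional K (M ⧸ A)] (hAB : A < B) :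
    Module.finrank K (M ⧸ B) < Module.finrank K (M ⧸ A) := by
  obtain ⟨x, hxB, hxA⟩ := SetLike.exists_of_lt hAB
  have hsplit := Submodule.finrank_quotient_add_finrank (B.map A.mkQ)
  rw [(Submodule.quotientQuotientEquivQuotient A B hAB.le).finrank_eq] at hsplit
  have himage : 0 < Module.finrank K (B.map A.mkQ) :=
    Module.finrank_pos_iff_exists_ne_zero.2
      ⟨⟨A.mkQ x, Submodule.mem_map_of_mem hxB⟩, by simpa using hxA⟩
  omega

section Filtration

variable {r : ℕ}

theorem mem_Gbar_iff {ℓ : Fin r → ℕ} {f : Fin r → PowerSeries ℂ} :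
    f ∈ Gbar r ℓ ↔ ∀ i, (ℓ i : ℕ∞) ≤ (f i).order :=
  Iff.rfl

theorem Gbar_antitone : Antitone (Gbar r) :=
  fun _ _ h _ hf i => le_trans (by exact_mod_cast h i) (hf i)

theorem mem_Gbar_add_eN_iff {ℓ : Fin r → ℕ} {f : Fin r → PowerSeries ℂ} (hf : f ∈ Gbar r ℓ)
    (i : Fin r) : f ∈ Gbar r (ℓ + eN i) ↔ coeff (ℓ i) (f i) = 0 := by
  refine ⟨fun h => ((succ_le_order_iff _ _).1 (by simpa [eN] using h i)).2, fun h j => ?_⟩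
  by_cases hji : j = i
  · subst hji
    simpa [eN] using (succ_le_order_iff _ _).2 ⟨hf j, h⟩
  · simpa [eN, hji] using hf j

noncomputable def truncation (m : Fin r → ℕ) :
    (Fin r → PowerSeries ℂ) →ₗ[ℂ] ((i : Fin r) → Fin (m i) → ℂ) :=
  LinearMap.pi fun i => LinearMap.pi fun k => coeff (k : ℕ) ∘ₗ LinearMap.proj i

theorem ker_truncation (m : Fin r → ℕ) : LinearMap.ker (truncation m) = Gbar r m := by
  ext f
  simp [truncation, mem_Gbar_iff, nat_le_order_iff, funext_iff, Fin.forall_iff]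

instance (O : Submodule ℂ (Fin r → PowerSeries ℂ)) (m : Fin r → ℕ) :
    FiniteDimensional ℂ (O ⧸ (Gbar r m).comap O.subtype) := by
  rw [← ker_truncation]
  exact finiteDimensional_quotient_comap_ker _ O

theorem hfun_lt_hfun_add_eN_iff (O : Submodule ℂ (Fin r → PowerSeries ℂ)) (ℓ : Fin r → ℕ)
    (i : Fin r) :
    hfun r O ℓ < hfun r O (ℓ + eN i) ↔ ∃ f ∈ Ffil r O ℓ, coeff (ℓ i) (f i) ≠ 0 := by
  have hle : (Gbar r (ℓ + eN i)).comap O.subtype ≤ (Gbar r ℓ).comap O.subtype :=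
    Submodule.comap_mono (Gbar_antitone le_self_add)
  constructor
  · intro hlt
    by_contra! hzero
    have heq : (Gbar r (ℓ + eN i)).comap O.subtype = (Gbar r ℓ).comap O.subtype :=
      hle.antisymm fun f hf => (mem_Gbar_add_eN_iff hf i).2 (hzero f ⟨f.2, hf⟩)
    exact hlt.ne (by rw [hfun, hfun, heq])
  · rintro ⟨f, ⟨hfO, hfG⟩, hf⟩
    refine finrank_quotient_lt_of_lt (hle.lt_of_not_ge fun hge => hf ?_)
    exact (mem_Gbar_add_eN_iff hfG i).1 (hge (show (⟨f, hfO⟩ : O) ∈ _ from hfG))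

end Filtration

theorem statement10_general (r : ℕ) (O : Submodule ℂ (Fin r → PowerSeries ℂ))
    (ℓ : Fin r → ℕ) :
    (∃ f ∈ O, ∀ i : Fin r, (f i).order = (ℓ i : ℕ∞)) ↔
      ∀ i : Fin r, hfun r O ℓ < hfun r O (ℓ + eN i) := by
  simp_rw [hfun_lt_hfun_add_eN_iff, order_eq_nat_iff_le_and_coeff_ne_zero, forall_and]
  constructor
  · rintro ⟨f, hfO, hfG, hf⟩ i
    exact ⟨f, ⟨hfO, hfG⟩, hf i⟩
  · intro h
    obtain ⟨f, ⟨hfO, hfG⟩, hf⟩ := Module.Dual.exists_forall_mem_ne_zero_of_forall_exists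
      (Ffil r O ℓ) (fun i => coeff (ℓ i) ∘ₗ LinearMap.proj i) h
    exact ⟨f, hfO, hfG, hf⟩

/-- `ℓ` belongs to the semigroup of values of `O` (i.e. some `f ∈ O` has
`ord_i f = ℓ_i` for every `i`) if and only if `h(ℓ+E_i) > h(ℓ)` for every index `i`. -/
theorem statement10 (r : ℕ) (hr : 1 ≤ r) (O : Submodule ℂ (Fin r → PowerSeries ℂ))
    (ℓ : Fin r → ℕ) :
    (∃ f ∈ O, ∀ i : Fin r, (f i).order = (ℓ i : ℕ∞)) ↔
      ∀ i : Fin r, hfun r O ℓ < hfun r O (ℓ + eN i) :=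
  statement10_general r O ℓ
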